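/- arXiv:1904.05959 — 5 statements merged into one kernel-verified Lean document; each statement's English description precedes it below -/
import Mathlib

section
/- For every damping ratio ζ with 0.613 ≤ ζ < 1, the ellipse approximating the cardioid is horizontally oriented: its real semi-axis exceeds its imaginary semi-axis, i.e., a(ζ) > b(ζ), where a(ζ) = e^{−β/tan β} cos β + e^{−π/tan β}, b(ζ) = e^{−β/tan β} sin β and β = arccos ζ. -/
/-!
Write `β = arccos ζ ∈ [0, arccos 0.613]`; the claim is `e^{-β cot β} (sin β - cos β) < e^{-π cot β}`.
For `β ≤ π/4` the left side is nonpositive. For `β > π/4` the claim says that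
`(π - β) cot β + log (sin β - cos β)` is negative. This function is strictly increasing on
`(π/4, arccos 0.613]`: in its derivative `-cot β - (π - β) / sin² β + (cos β + sin β) / (sin β - cos β)`
the last term dominates, as `sin β - cos β < 0.18` there. Its value at `arccos 0.613` is about
`-4.5 · 10⁻⁴`, which Taylor bounds for `cos` (locating `arccos 0.613`) and for `exp` certify.
-/

open Real Set

theorem abs_cos_sub_taylor_six_le {x : ℝ} (hx : |x| ≤ 1) :
    |cos x - (1 - x ^ 2 / 2 + x ^ 4 / 24 - x ^ 6 / 720)| ≤ |x| ^ 8 * (9 / 322560) := by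
  have hI : ‖(x : ℂ) * Complex.I‖ = |x| := by simp
  have h := Complex.exp_bound (x := (x : ℂ) * Complex.I) (hI ▸ hx) (n := 8) (by norm_num)
  have hre : (Complex.exp ((x : ℂ) * Complex.I)
      - ∑ m ∈ Finset.range 8, ((x : ℂ) * Complex.I) ^ m / m.factorial).re
      = cos x - (1 - x ^ 2 / 2 + x ^ 4 / 24 - x ^ 6 / 720) := by
    rw [Complex.sub_re, Complex.exp_ofReal_mul_I_re]
    norm_num [Finset.sum_range_succ, Nat.factorial, mul_pow, pow_succ]
    ring
  rw [hI] at h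
  calc _ = |(_ : ℂ).re| := by rw [hre]
    _ ≤ _ := Complex.abs_re_le_norm _
    _ ≤ _ := h
    _ = _ := by norm_num [Nat.factorial]

theorem sin_sub_cos_eq_sqrt_two_mul_sin (x : ℝ) : sin x - cos x = √2 * sin (x - π / 4) := by
  rw [sin_sub, cos_pi_div_four, sin_pi_div_four]
  ring_nf
  rw [sq_sqrt zero_le_two]
  ring

theorem cos_lt_sin_of_mem_Ioo {x : ℝ} (hx : x ∈ Ioo (π / 4) (5 * π / 4)) : cos x < sin x := by
  have := sin_pos_of_pos_of_lt_pi (x := x - π / 4) (by linarith [hx.1]) (by linarith [hx.2])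
  nlinarith [sin_sub_cos_eq_sqrt_two_mul_sin x, sqrt_pos.2 (zero_lt_two : (0:ℝ) < 2)]

theorem sin_le_cos_of_mem_Icc {x : ℝ} (hx : x ∈ Icc (-(3 * π / 4)) (π / 4)) : sin x ≤ cos x := by
  have := sin_nonpos_of_nonpos_of_neg_pi_le (x := x - π / 4) (by linarith [hx.2]) (by linarith [hx.1])
  nlinarith [sin_sub_cos_eq_sqrt_two_mul_sin x, sqrt_nonneg 2]

/-- In the paper's notation, `axisLogRatio β = log ((b - c) / (a - c))`. -/
noncomputable def axisLogRatio (β : ℝ) : ℝ := (π - β) / tan β + log (sin β - cos β)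

theorem hasDerivAt_axisLogRatio {β : ℝ} (hs : sin β ≠ 0) (hsc : sin β - cos β ≠ 0) :
    HasDerivAt axisLogRatio
      (-(cos β / sin β) - (π - β) / sin β ^ 2 + (cos β + sin β) / (sin β - cos β)) β := by
  have hdef : axisLogRatio = fun x ↦ (π - x) * cos x / sin x + log (sin x - cos x) := by
    ext x
    rw [axisLogRatio, tan_eq_sin_div_cos, div_div_eq_mul_div]
  rw [hdef]
  refine HasDerivAt.congr_deriv ((((hasDerivAt_id' β).const_sub π).mul (hasDerivAt_cos β)).div
    (hasDerivAt_sin β) hs |>.add ((hasDerivAt_sin β).sub (hasDerivAt_cos β) |>.log hsc)) ?_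
  simp only [Pi.mul_apply, Pi.sub_apply]
  field_simp
  linear_combination (π - β) * (cos β - sin β) * sin_sq_add_cos_sq β

theorem strictMonoOn_axisLogRatio : StrictMonoOn axisLogRatio (Ioc (π / 4) (arccos 0.613)) := by
  have hβ₀ : arccos 0.613 < π / 2 := arccos_lt_pi_div_two.2 (by norm_num)
  have bounds : ∀ β ∈ Ioc (π / 4) (arccos 0.613), 0.613 ≤ cos β ∧ cos β < sin β := by
    intro β ⟨h₁, h₂⟩
    refine ⟨?_, cos_lt_sin_of_mem_Ioo ⟨h₁, by linarith⟩⟩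
    calc (0.613 : ℝ) = cos (arccos 0.613) := (cos_arccos (by norm_num) (by norm_num)).symm
      _ ≤ cos β := cos_le_cos_of_nonneg_of_le_pi (by linarith [pi_pos]) (arccos_le_pi _) h₂
  have hasDeriv : ∀ β ∈ Ioc (π / 4) (arccos 0.613), HasDerivAt axisLogRatio
      (-(cos β / sin β) - (π - β) / sin β ^ 2 + (cos β + sin β) / (sin β - cos β)) β := by
    intro β hβ
    obtain ⟨hc, hcs⟩ := bounds β hβ
    exact hasDerivAt_axisLogRatio (by linarith) (by linarith)
  refine strictMonoOn_of_hasDerivWithinAt_pos (convex_Ioc _ _)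
    (fun β hβ ↦ (hasDeriv β hβ).continuousAt.continuousWithinAt)
    (fun β hβ ↦ (hasDeriv β (interior_subset hβ)).hasDerivWithinAt) ?_
  rw [interior_Ioc]
  intro β hβ
  obtain ⟨hc, hcs⟩ := bounds β (Ioo_subset_Ioc_self hβ)
  have hπ : π - β < 2.3625 := by linarith [hβ.1, pi_lt_d2]
  have hs : 0 < sin β := by linarith
  have hsc : 0 < sin β - cos β := by linarith
  have hcleared : (π - β) * (sin β - cos β) + cos β * sin β * (sin β - cos β)
      < (cos β + sin β) * sin β ^ 2 := by
    nlinarith [sin_sq_add_cos_sq β]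
  have hdom : cos β / sin β + (π - β) / sin β ^ 2 < (cos β + sin β) / (sin β - cos β) := by
    rw [div_add_div _ _ hs.ne' (by positivity), div_lt_div_iff₀ (by positivity) hsc]
    nlinarith
  linarith

theorem axisLogRatio_arccos_lt_zero : axisLogRatio (arccos 0.613) < 0 := by
  have hβ₀ : 0.9109 ≤ arccos 0.613 := by
    have hcos : (0.613 : ℝ) ≤ cos 0.9109 := by
      have := (abs_le.1 (abs_cos_sub_taylor_six_le (x := 0.9109) (by norm_num [abs_of_pos]))).1
      norm_num [abs_of_pos] at this ⊢
      linarith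
    calc 0.9109 = arccos (cos 0.9109) := (arccos_cos (by norm_num) (by linarith [pi_gt_three])).symm
      _ ≤ arccos 0.613 := arccos_le_arccos hcos
  have hexp : exp 1.7308 < 5.6452 := by
    have := exp_bound' (x := 0.8654) (by norm_num) (by norm_num) (n := 8) (by norm_num)
    norm_num [Finset.sum_range_succ, Nat.factorial] at this
    calc exp 1.7308 = exp 0.8654 ^ 2 := by rw [← exp_nat_mul]; norm_num
      _ < 5.6452 := by norm_num; nlinarith [exp_pos (4327 / 5000)]
  rw [axisLogRatio, tan_arccos, sin_arccos, cos_arccos (by norm_num) (by norm_num)]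
  set s := √(1 - 0.613 ^ 2 : ℝ)
  have hs : 0.79008 ≤ s ∧ s ≤ 0.79009 :=
    ⟨(le_sqrt (by norm_num) (by norm_num)).2 (by norm_num),
      (sqrt_le_left (by norm_num)).2 (by norm_num)⟩
  have hslope : (π - arccos 0.613) / (s / 0.613) ≤ 1.7308 := by
    rw [div_div_eq_mul_div, div_le_iff₀ (by linarith)]
    nlinarith [pi_lt_d4]
  have hlog : log (s - 0.613) < -1.7308 := by
    rw [log_lt_iff_lt_exp (by linarith), exp_neg, lt_inv_comm₀ (by linarith) (exp_pos _)]
    calc exp 1.7308 < 5.6452 := hexp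
      _ < (s - 0.613)⁻¹ := by rw [lt_inv_comm₀ (by norm_num) (by linarith)]; norm_num; linarith
  linarith

theorem exp_mul_sin_lt_exp_mul_cos_add_exp {β : ℝ} (h₀ : 0 ≤ β) (hβ : β ≤ arccos 0.613) :
    exp (-β / tan β) * sin β < exp (-β / tan β) * cos β + exp (-π / tan β) := by
  rcases le_or_gt β (π / 4) with hle | hlt
  · have := sin_le_cos_of_mem_Icc ⟨by linarith [pi_pos], hle⟩
    nlinarith [exp_pos (-β / tan β), exp_pos (-π / tan β)]
  · have hneg : axisLogRatio β < 0 :=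
      (strictMonoOn_axisLogRatio.monotoneOn ⟨hlt, hβ⟩ ⟨hlt.trans_le hβ, le_rfl⟩ hβ).trans_lt
        axisLogRatio_arccos_lt_zero
    have hsc : 0 < sin β - cos β :=
      sub_pos.2 (cos_lt_sin_of_mem_Ioo ⟨hlt, by linarith [arccos_le_pi 0.613, pi_pos]⟩)
    have hlog : sin β - cos β < exp (-((π - β) / tan β)) := by
      rw [← log_lt_iff_lt_exp hsc]
      rw [axisLogRatio] at hneg
      linarith
    have := mul_lt_mul_of_pos_left hlog (exp_pos (-β / tan β))
    rw [← exp_add, show -β / tan β + -((π - β) / tan β) = -π / tan β by ring] at this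
    linarith

theorem ellipse_horizontal_of_large_damping_general (ζ : ℝ) (h1 : 0.613 ≤ ζ) :
    Real.exp (-(Real.arccos ζ) / Real.tan (Real.arccos ζ)) * Real.cos (Real.arccos ζ)
      + Real.exp (-Real.pi / Real.tan (Real.arccos ζ))
    > Real.exp (-(Real.arccos ζ) / Real.tan (Real.arccos ζ)) * Real.sin (Real.arccos ζ) :=
  exp_mul_sin_lt_exp_mul_cos_add_exp (arccos_nonneg ζ) (arccos_le_arccos h1)

/-- For damping ratio `0.613 ≤ ζ < 1`, the ellipse approximating the cardioid is
horizontally oriented: `a(ζ) > b(ζ)`, where, with `β = arccos ζ`,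
`a(ζ) = e^{-β/tan β} cos β + e^{-π/tan β}` and `b(ζ) = e^{-β/tan β} sin β`. -/
theorem ellipse_horizontal_of_large_damping (ζ : ℝ) (h1 : 0.613 ≤ ζ) (h2 : ζ < 1) :
    Real.exp (-(Real.arccos ζ) / Real.tan (Real.arccos ζ)) * Real.cos (Real.arccos ζ)
      + Real.exp (-Real.pi / Real.tan (Real.arccos ζ))
    > Real.exp (-(Real.arccos ζ) / Real.tan (Real.arccos ζ)) * Real.sin (Real.arccos ζ) :=
  ellipse_horizontal_of_large_damping_general ζ h1
end

section
/- There exists a critical damping ratio ζ* with 0.61 < ζ* < 0.615 at which the approximating ellipse degenerates into a circle, i.e., a(ζ*) = b(ζ*), where a(ζ) = e^{−β/tan β} cos β + e^{−π/tan β}, b(ζ) = e^{−β/tan β} sin β and β = arccos ζ. -/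
/-!
With `β = arccos ζ` and `s = √(1 - ζ²)` we have `cos β = ζ`, `sin β = s`, `tan β = s / ζ`, so
`a(ζ) - b(ζ) = e^{-βζ/s} (ζ - s + e^{-(π - β)ζ/s})`. The second factor is continuous on `(-1, 1)`,
negative at `0.61` and positive at `0.615`, and the intermediate value theorem gives the root.
The two signs need `arccos` to about three digits; the fourth-order Taylor bound for `cos` is too
coarse near `0.9`, so it is applied at `x / 8` and followed by three angle doublings.
-/

open Real Set

lemma cos_mem_Icc_of_abs_le_one {x : ℝ} (hx : |x| ≤ 1) :
    cos x ∈ Icc (1 - x ^ 2 / 2 - x ^ 4 * (5 / 96)) (1 - x ^ 2 / 2 + x ^ 4 * (5 / 96)) := by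
  have h := abs_le.1 (cos_bound hx)
  rw [pow_abs, abs_of_nonneg (by positivity)] at h
  constructor <;> linarith [h.1, h.2]

lemma cos_two_mul_mem_Icc {x lo hi : ℝ} (hlo : 0 ≤ lo) (h : cos x ∈ Icc lo hi) :
    cos (2 * x) ∈ Icc (2 * lo ^ 2 - 1) (2 * hi ^ 2 - 1) := by
  rw [cos_two_mul]
  constructor <;> nlinarith [h.1, h.2]

lemma cos_0_916_lt : cos 0.916 < 0.61 := by
  have h := cos_two_mul_mem_Icc (by norm_num) <| cos_two_mul_mem_Icc (by norm_num) <|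
    cos_two_mul_mem_Icc (by norm_num) <|
      cos_mem_Icc_of_abs_le_one (x := 0.1145) (by norm_num [abs_of_pos])
  norm_num at h
  linarith [h.2]

lemma lt_cos_0_9064 : 0.615 < cos 0.9064 := by
  have h := cos_two_mul_mem_Icc (by norm_num) <| cos_two_mul_mem_Icc (by norm_num) <|
    cos_two_mul_mem_Icc (by norm_num) <|
      cos_mem_Icc_of_abs_le_one (x := 0.1133) (by norm_num [abs_of_pos])
  norm_num at h
  linarith [h.1]

lemma arccos_lt_of_cos_lt {x y : ℝ} (hy₀ : 0 ≤ y) (hyπ : y ≤ π) (hx : x ≤ 1) (h : cos y < x) :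
    arccos x < y := by
  simpa [arccos_cos hy₀ hyπ] using arccos_lt_arccos (neg_one_le_cos y) h hx

lemma lt_arccos_of_lt_cos {x y : ℝ} (hy₀ : 0 ≤ y) (hyπ : y ≤ π) (hx : -1 ≤ x) (h : x < cos y) :
    y < arccos x := by
  simpa [arccos_cos hy₀ hyπ] using arccos_lt_arccos hx h (cos_le_one y)

lemma exp_neg_1_713_lt : exp (-1.713) < 0.1824 := by
  have h := (abs_le.1 (exp_bound (x := -0.713) (by norm_num [abs_of_pos]) (n := 5) (by norm_num))).2
  norm_num [Finset.sum_range_succ, Nat.factorial] at h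
  have hsplit : exp (-1.713) = exp (-1) * exp (-0.713) := by rw [← exp_add]; norm_num
  rw [hsplit]
  nlinarith [exp_neg_one_lt_d9, exp_pos (-1), exp_pos (-0.713)]

lemma lt_exp_neg_1_7434 : 0.1736 < exp (-1.7434) := by
  have h := (abs_le.1 (exp_bound (x := -0.7434) (by norm_num [abs_of_pos]) (n := 5) (by norm_num))).1
  norm_num [Finset.sum_range_succ, Nat.factorial] at h
  have hsplit : exp (-1.7434) = exp (-1) * exp (-0.7434) := by rw [← exp_add]; norm_num
  rw [hsplit]
  nlinarith [exp_neg_one_gt_d9, exp_pos (-1), exp_pos (-0.7434)]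

/-- `a(ζ) - b(ζ)` with the positive factor `e^{-β/tan β}` removed. -/
noncomputable def semiAxisGap (ζ : ℝ) : ℝ :=
  ζ - √(1 - ζ ^ 2) + exp (-((π - arccos ζ) * ζ) / √(1 - ζ ^ 2))

lemma sub_semiAxis_eq_exp_mul_semiAxisGap {ζ : ℝ} (h₁ : -1 ≤ ζ) (h₂ : ζ ≤ 1) :
    exp (-arccos ζ / tan (arccos ζ)) * cos (arccos ζ) + exp (-π / tan (arccos ζ))
      - exp (-arccos ζ / tan (arccos ζ)) * sin (arccos ζ)
      = exp (-(arccos ζ * ζ) / √(1 - ζ ^ 2)) * semiAxisGap ζ := by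
  rw [tan_arccos, cos_arccos h₁ h₂, sin_arccos, div_div_eq_mul_div, div_div_eq_mul_div,
    semiAxisGap, mul_add, ← exp_add]
  ring_nf

lemma continuousOn_semiAxisGap : ContinuousOn semiAxisGap (Ioo (-1) 1) := by
  have hs : ∀ ζ ∈ Ioo (-1 : ℝ) 1, √(1 - ζ ^ 2) ≠ 0 := fun ζ hζ =>
    (sqrt_pos.2 (by nlinarith [hζ.1, hζ.2])).ne'
  unfold semiAxisGap
  fun_prop (disch := assumption)

lemma semiAxisGap_0_61_neg : semiAxisGap 0.61 < 0 := by
  have hs : 0.7924 < √(1 - (0.61 : ℝ) ^ 2) ∧ √(1 - (0.61 : ℝ) ^ 2) < 0.7925 :=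
    ⟨(lt_sqrt (by norm_num)).2 (by norm_num), (sqrt_lt' (by norm_num)).2 (by norm_num)⟩
  have hβ : arccos 0.61 < 0.916 :=
    arccos_lt_of_cos_lt (by norm_num) (by linarith [pi_gt_three]) (by norm_num) cos_0_916_lt
  have hexp : exp (-((π - arccos 0.61) * 0.61) / √(1 - (0.61 : ℝ) ^ 2)) ≤ exp (-1.713) := by
    gcongr
    rw [div_le_iff₀ (by linarith)]
    nlinarith [pi_gt_d6]
  unfold semiAxisGap
  linarith [exp_neg_1_713_lt]

lemma semiAxisGap_0_615_pos : 0 < semiAxisGap 0.615 := by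
  have hs : 0.7885 < √(1 - (0.615 : ℝ) ^ 2) ∧ √(1 - (0.615 : ℝ) ^ 2) < 0.7886 :=
    ⟨(lt_sqrt (by norm_num)).2 (by norm_num), (sqrt_lt' (by norm_num)).2 (by norm_num)⟩
  have hβ : 0.9064 < arccos 0.615 :=
    lt_arccos_of_lt_cos (by norm_num) (by linarith [pi_gt_three]) (by norm_num) lt_cos_0_9064
  have hexp : exp (-1.7434) ≤ exp (-((π - arccos 0.615) * 0.615) / √(1 - (0.615 : ℝ) ^ 2)) := by
    gcongr
    rw [le_div_iff₀ (by linarith)]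
    nlinarith [pi_lt_d6]
  unfold semiAxisGap
  linarith [lt_exp_neg_1_7434]

/-- There is a critical damping ratio `ζ*` with `0.61 < ζ* < 0.615` at which the
approximating ellipse degenerates into a circle, i.e. `a(ζ*) = b(ζ*)`, where,
with `β = arccos ζ`, `a(ζ) = e^{-β/tan β} cos β + e^{-π/tan β}` and
`b(ζ) = e^{-β/tan β} sin β`. -/
theorem exists_critical_damping_ratio :
    ∃ ζ : ℝ, 0.61 < ζ ∧ ζ < 0.615 ∧
      Real.exp (-(Real.arccos ζ) / Real.tan (Real.arccos ζ)) * Real.cos (Real.arccos ζ)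
        + Real.exp (-Real.pi / Real.tan (Real.arccos ζ))
      = Real.exp (-(Real.arccos ζ) / Real.tan (Real.arccos ζ)) * Real.sin (Real.arccos ζ) := by
  have hcont : ContinuousOn semiAxisGap (Icc 0.61 0.615) :=
    continuousOn_semiAxisGap.mono (Icc_subset_Ioo (by norm_num) (by norm_num))
  obtain ⟨ζ, ⟨h₁, h₂⟩, hroot⟩ :=
    intermediate_value_Ioo (by norm_num) hcont ⟨semiAxisGap_0_61_neg, semiAxisGap_0_615_pos⟩
  refine ⟨ζ, h₁, h₂, sub_eq_zero.1 ?_⟩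
  rw [sub_semiAxis_eq_exp_mul_semiAxisGap (by linarith) (by linarith), hroot, mul_zero]
end

section
/- For every damping ratio ζ with 0 < ζ ≤ 0.6, the ellipse approximating the cardioid is vertically oriented: its imaginary semi-axis exceeds its real semi-axis, i.e., a(ζ) < b(ζ), where a(ζ) = e^{−β/tan β} cos β + e^{−π/tan β}, b(ζ) = e^{−β/tan β} sin β and β = arccos ζ. -/
/-!
With `β = arccos ζ` we have `cos β = ζ`, `sin β = s := √(1 - ζ²)` and `1 / tan β = ζ / s`.
Dividing by `e^{-β ζ / s}` turns the claim into `ζ + e^{-(π - β) ζ / s} < s`. Since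
`π - β = π/2 + arcsin ζ ≥ π/2 + ζ`, it suffices to show `e^{-(π/2 + ζ) ζ / s} < s - ζ`.
In the half-angle coordinate `u = ζ / (1 + s)` we get `ζ = 2u/(1+u²)` and `s = (1-u²)/(1+u²)`,
so everything is rational in `u`, and `0 < ζ ≤ 3/5` becomes `0 < u ≤ 1/3`. Near `u = 0` the
bound `e^x ≥ 1 + x` is enough. Further out, the exponent increases and `s - ζ` decreases in
`u`, so on each subinterval the inequality follows from a Taylor lower bound for `exp` at the
left endpoint. At `ζ = 3/5` the margin is under two percent, so the subintervals get shorter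
as `u` approaches `1/3`.
-/

open Real Set

lemma exists_tan_half {ζ : ℝ} (h₀ : 0 < ζ) (h : ζ ≤ 3 / 5) :
    ∃ u ∈ Ioc (0 : ℝ) (1 / 3),
      ζ = 2 * u / (1 + u ^ 2) ∧ √(1 - ζ ^ 2) = (1 - u ^ 2) / (1 + u ^ 2) := by
  set s := √(1 - ζ ^ 2)
  have hs : s ^ 2 = 1 - ζ ^ 2 := sq_sqrt (by nlinarith)
  have hs₀ : 0 ≤ s := sqrt_nonneg _
  have hu : 1 + (ζ / (1 + s)) ^ 2 = 2 / (1 + s) := by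
    field_simp
    nlinarith
  refine ⟨ζ / (1 + s), ⟨by positivity, ?_⟩, ?_, ?_⟩
  · rw [div_le_iff₀ (by positivity)]
    nlinarith
  · rw [hu]
    field_simp
  · rw [hu]
    field_simp
    nlinarith

lemma monotoneOn_two_mul_div_one_add_sq :
    MonotoneOn (fun u : ℝ => 2 * u / (1 + u ^ 2)) (Icc 0 1) := by
  rintro p ⟨hp, -⟩ u ⟨-, hu⟩ hpu
  dsimp only
  rw [div_le_div_iff₀ (by positivity) (by positivity)]
  have hpu₁ : p * u ≤ 1 := mul_le_one₀ (hpu.trans hu) (hp.trans hpu) hu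
  nlinarith [mul_nonneg (sub_nonneg.2 hpu) (sub_nonneg.2 hpu₁)]

lemma monotoneOn_two_mul_div_one_sub_sq :
    MonotoneOn (fun u : ℝ => 2 * u / (1 - u ^ 2)) (Ico 0 1) := by
  rintro p ⟨hp, -⟩ u ⟨-, hu⟩ hpu
  dsimp only
  rw [div_le_div_iff₀ (by nlinarith) (by nlinarith)]
  nlinarith [mul_nonneg (sub_nonneg.2 hpu) (mul_nonneg hp (hp.trans hpu))]

lemma antitoneOn_one_sub_two_mul_sub_sq_div :
    AntitoneOn (fun u : ℝ => (1 - 2 * u - u ^ 2) / (1 + u ^ 2)) (Icc 0 1) := by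
  rintro u ⟨hu, -⟩ q ⟨-, hq⟩ huq
  dsimp only
  rw [div_le_div_iff₀ (by positivity) (by positivity)]
  nlinarith [mul_nonneg (sub_nonneg.2 huq) (mul_nonneg hu (hu.trans huq)),
    mul_nonneg (sub_nonneg.2 huq) hu, mul_nonneg (sub_nonneg.2 huq) (sub_nonneg.2 hq)]

/-- `e^{-(π/2 + ζ) ζ / s} < s - ζ` with `ζ = 2u/(1+u²)` and `s = (1-u²)/(1+u²)`. -/
def HalfAngleBound (u : ℝ) : Prop :=
  exp (-((π / 2 + 2 * u / (1 + u ^ 2)) * (2 * u / (1 - u ^ 2)))) <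
    (1 - 2 * u - u ^ 2) / (1 + u ^ 2)

lemma halfAngleBound_of_le {u : ℝ} (hu₀ : 0 < u) (hu : u ≤ 9 / 50) : HalfAngleBound u := by
  set x := (π / 2 + 2 * u / (1 + u ^ 2)) * (2 * u / (1 - u ^ 2))
  have hu₁ : 0 < 1 - u ^ 2 := by nlinarith
  have hζ : 19 / 10 * u ≤ 2 * u / (1 + u ^ 2) := by
    rw [le_div_iff₀ (by positivity)]
    nlinarith
  have hx : (157 / 50 + 19 / 5 * u) * u ≤ x * (1 - u ^ 2) := by
    have : x * (1 - u ^ 2) = (π / 2 + 2 * u / (1 + u ^ 2)) * (2 * u) := by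
      simp only [x]
      field_simp
    rw [this]
    nlinarith [pi_gt_d2]
  have hx₀ : 0 < x := by nlinarith
  have hR : 0 ≤ 1 - 2 * u - u ^ 2 := by nlinarith
  calc exp (-x) = (exp x)⁻¹ := exp_neg x
    _ < (1 + x)⁻¹ := inv_strictAnti₀ (by positivity) (by linarith [add_one_lt_exp hx₀.ne'])
    _ ≤ (1 - 2 * u - u ^ 2) / (1 + u ^ 2) := by
      rw [inv_eq_one_div, div_le_div_iff₀ (by positivity) (by positivity)]
      nlinarith [mul_nonneg hu₀.le (sub_nonneg.2 hu), mul_le_mul_of_nonneg_right hx hR]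

/-- `157/100` is a rational stand-in for `π/2`, so that `hcert` can be decided by `norm_num`. -/
lemma halfAngleBound_of_mem_Icc {p q : ℝ} {n : ℕ} (hp : 0 ≤ p) (hq : q < 1)
    (hcert : 1 < (∑ i ∈ Finset.range n,
        ((157 / 100 + 2 * p / (1 + p ^ 2)) * (2 * p / (1 - p ^ 2))) ^ i / (i.factorial : ℝ)) *
      ((1 - 2 * q - q ^ 2) / (1 + q ^ 2))) :
    Icc p q ⊆ {u | HalfAngleBound u} := by
  rintro u ⟨hpu, huq⟩
  have hu : 0 ≤ u := hp.trans hpu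
  set x₀ := (157 / 100 + 2 * p / (1 + p ^ 2)) * (2 * p / (1 - p ^ 2))
  have hp₀ : 0 ≤ 2 * p / (1 - p ^ 2) := div_nonneg (by positivity) (by nlinarith)
  have hx₀ : 0 ≤ x₀ := mul_nonneg (by positivity) hp₀
  have hx : x₀ ≤ (π / 2 + 2 * u / (1 + u ^ 2)) * (2 * u / (1 - u ^ 2)) := by
    have hζ := monotoneOn_two_mul_div_one_add_sq ⟨hp, by linarith⟩ ⟨hu, by linarith⟩ hpu
    have hζs := monotoneOn_two_mul_div_one_sub_sq ⟨hp, by linarith⟩ ⟨hu, by linarith⟩ hpu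
    dsimp only at hζ hζs
    exact mul_le_mul (by linarith [pi_gt_d2]) hζs hp₀ (by positivity)
  have hT := sum_le_exp_of_nonneg hx₀ n
  have hT₀ : 0 < ∑ i ∈ Finset.range n, x₀ ^ i / (i.factorial : ℝ) :=
    (Finset.sum_nonneg fun i _ => by positivity).lt_of_ne fun h => by
      rw [← h, zero_mul] at hcert
      linarith
  calc exp (-((π / 2 + 2 * u / (1 + u ^ 2)) * (2 * u / (1 - u ^ 2))))
      ≤ (exp x₀)⁻¹ := by rw [← exp_neg]; exact exp_le_exp.2 (neg_le_neg hx)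
    _ ≤ (∑ i ∈ Finset.range n, x₀ ^ i / (i.factorial : ℝ))⁻¹ := inv_anti₀ hT₀ hT
    _ < (1 - 2 * q - q ^ 2) / (1 + q ^ 2) := by rwa [inv_lt_iff_one_lt_mul₀' hT₀]
    _ ≤ (1 - 2 * u - u ^ 2) / (1 + u ^ 2) :=
      antitoneOn_one_sub_two_mul_sub_sq_div ⟨hu, by linarith⟩ ⟨hp.trans (hpu.trans huq), hq.le⟩ huq

lemma Ioc_subset_setOf_halfAngleBound : Ioc (0 : ℝ) (1 / 3) ⊆ {u | HalfAngleBound u} := by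
  have glue {a b c : ℝ} (h₁ : Icc a b ⊆ {u | HalfAngleBound u})
      (h₂ : Icc b c ⊆ {u | HalfAngleBound u}) : Icc a c ⊆ {u | HalfAngleBound u} :=
    Icc_subset_Icc_union_Icc.trans (union_subset h₁ h₂)
  refine (Ioc_subset_Ioc_union_Icc (b := 9 / 50)).trans <|
    union_subset (fun u hu => halfAngleBound_of_le hu.1 hu.2) ?_
  -- greedy breakpoints: each is the largest multiple of `1/1000` (or `1/3`) for which the
  -- certificate of `halfAngleBound_of_mem_Icc` still holds on the interval from the previous one
  refine glue (b := 219 / 1000) ?_ <| glue (b := 127 / 500) ?_ <| glue (b := 141 / 500) ?_ <|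
    glue (b := 151 / 500) ?_ <| glue (b := 63 / 200) ?_ <| glue (b := 81 / 250) ?_ <|
    glue (b := 329 / 1000) ?_ <| glue (b := 83 / 250) ?_ ?_
  all_goals
    exact halfAngleBound_of_mem_Icc (n := 9) (by norm_num) (by norm_num)
      (by norm_num [Finset.sum_range_succ, Nat.factorial])

lemma exp_neg_lt_sqrt_one_sub_sq_sub {ζ : ℝ} (h₀ : 0 < ζ) (h : ζ ≤ 3 / 5) :
    exp (-((π / 2 + ζ) * ζ / √(1 - ζ ^ 2))) < √(1 - ζ ^ 2) - ζ := by
  obtain ⟨u, hu, rfl, hs⟩ := exists_tan_half h₀ h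
  have key : HalfAngleBound u := Ioc_subset_setOf_halfAngleBound hu
  rw [HalfAngleBound] at key
  convert key using 3
  · rw [hs]
    field_simp
  · rw [hs]
    field_simp
    ring

/-- For damping ratio `0 < ζ ≤ 0.6`, the ellipse approximating the cardioid is
vertically oriented: `a(ζ) < b(ζ)`, where, with `β = arccos ζ`,
`a(ζ) = e^{-β/tan β} cos β + e^{-π/tan β}` and `b(ζ) = e^{-β/tan β} sin β`. -/
theorem ellipse_vertical_of_small_damping (ζ : ℝ) (h1 : 0 < ζ) (h2 : ζ ≤ 0.6) :
    Real.exp (-(Real.arccos ζ) / Real.tan (Real.arccos ζ)) * Real.cos (Real.arccos ζ)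
      + Real.exp (-Real.pi / Real.tan (Real.arccos ζ))
    < Real.exp (-(Real.arccos ζ) / Real.tan (Real.arccos ζ)) * Real.sin (Real.arccos ζ) := by
  set β := arccos ζ
  set s := √(1 - ζ ^ 2)
  have hcos : cos β = ζ := cos_arccos (by linarith) (by linarith)
  have hsin : sin β = s := sin_arccos ζ
  have htan : tan β = s / ζ := by rw [tan_eq_sin_div_cos, hsin, hcos]
  have hβ : π / 2 + ζ ≤ π - β := by
    have := sin_le (arcsin_nonneg.2 h1.le)
    rw [sin_arcsin (by linarith) (by linarith)] at this
    linarith [arccos_eq_pi_div_two_sub_arcsin ζ]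
  have hsplit : exp (-π / tan β) = exp (-β / tan β) * exp (-((π - β) * ζ / s)) := by
    rw [← exp_add, htan]
    congr 1
    field_simp
    ring
  have hkey : exp (-((π - β) * ζ / s)) < s - ζ := by
    refine (exp_le_exp.2 ?_).trans_lt (exp_neg_lt_sqrt_one_sub_sq_sub h1 (by linarith))
    gcongr
  rw [hcos, hsin, hsplit, ← mul_add]
  exact mul_lt_mul_of_pos_left (by linarith) (exp_pos _)
end

section
/- Let T > 0 (sampling period) and 0 < β < π/2. The image under the map s ↦ exp(sT) of the set of complex numbers s = −σ + iω with σ ≥ 0, 0 ≤ ω, ωT < π and ω ≤ σ · tan β (the upper half of the cone of damping ratio at least cos β in the s-plane) equals the set of nonzero complex numbers z with 0 ≤ arg z < π and |z| ≤ exp(−(arg z)/tan β) (the upper half of the cardioid region in the z-plane). -/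
/-!
With `w = sT`, the cone is invariant under the scaling by `T`, and the extra condition
`ωT < π` puts `w` in the strip `-π < im w ≤ π` on which `Complex.log` inverts `exp`.
So the image is the set of `z ≠ 0` with `log z = log ‖z‖ + i arg z` in the cone, and
`im w ≤ -re w · tan β` for `w = log z` reads `‖z‖ ≤ exp (-arg z / tan β)`.
-/

open Complex

/-- `k = tan β` is the slope of the boundary ray of damping ratio `cos β`. -/
def upperDampingCone (k : ℝ) : Set ℂ :=
  {w | w.re ≤ 0 ∧ 0 ≤ w.im ∧ w.im ≤ -w.re * k}

lemma mul_ofReal_mem_upperDampingCone_iff {k T : ℝ} (hT : 0 < T) {s : ℂ} :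
    s * T ∈ upperDampingCone k ↔ s ∈ upperDampingCone k := by
  have hre : s.re * T ≤ 0 ↔ s.re ≤ 0 := by
    simpa only [zero_mul] using mul_le_mul_iff_left₀ (c := 0) hT
  have hcone : -(s.re * T) * k = -s.re * k * T := by ring
  simp only [upperDampingCone, Set.mem_ofPred_eq, re_mul_ofReal, im_mul_ofReal, hcone, hre,
    mul_le_mul_iff_left₀ hT, mul_nonneg_iff_of_pos_right hT]

lemma image_exp_eq_of_subset_strip {S : Set ℂ}
    (hS : S ⊆ {w | -Real.pi < w.im ∧ w.im ≤ Real.pi}) :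
    exp '' S = {z | z ≠ 0 ∧ log z ∈ S} := by
  ext z
  constructor
  · rintro ⟨w, hw, rfl⟩
    exact ⟨exp_ne_zero w, by rwa [log_exp (hS hw).1 (hS hw).2]⟩
  · rintro ⟨hz, hlog⟩
    exact ⟨log z, hlog, exp_log hz⟩

lemma log_mem_upperDampingCone_iff {k : ℝ} (hk : 0 < k) {z : ℂ} (hz : z ≠ 0) :
    log z ∈ upperDampingCone k ↔ 0 ≤ z.arg ∧ ‖z‖ ≤ Real.exp (-z.arg / k) := by
  rw [← Real.log_le_iff_le_exp (norm_pos_iff.mpr hz), le_div_iff₀ hk]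
  simp only [upperDampingCone, Set.mem_ofPred_eq, log_re, log_im]
  constructor
  · rintro ⟨-, harg, hcone⟩
    exact ⟨harg, by linarith⟩
  · rintro ⟨harg, hcone⟩
    exact ⟨by nlinarith, harg, by linarith⟩

/-- Mapping the (upper half of the) cone of damping ratio at least `cos β` from
the `s`-plane onto the cardioid region in the `z`-plane: for sampling period
`T > 0` and `0 < β < π/2`, the image under `s ↦ exp(sT)` of
`{s = -σ + iω : σ ≥ 0, 0 ≤ ω, ωT < π, ω ≤ σ tan β}` equals
`{z ≠ 0 : 0 ≤ arg z < π, |z| ≤ exp(-(arg z)/tan β)}`. -/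
theorem cone_maps_to_cardioid (T : ℝ) (hT : 0 < T) (β : ℝ)
    (hβ1 : 0 < β) (hβ2 : β < Real.pi / 2) :
    (fun s : ℂ => Complex.exp (s * (T : ℂ))) ''
        {s : ℂ | s.re ≤ 0 ∧ 0 ≤ s.im ∧ s.im * T < Real.pi ∧ s.im ≤ (-s.re) * Real.tan β}
      = {z : ℂ | z ≠ 0 ∧ 0 ≤ z.arg ∧ z.arg < Real.pi ∧
          ‖z‖ ≤ Real.exp (-(z.arg) / Real.tan β)} := by
  have htan : 0 < Real.tan β := Real.tan_pos_of_pos_of_lt_pi_div_two hβ1 hβ2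
  set C := upperDampingCone (Real.tan β) ∩ {w | w.im < Real.pi}
  have hS : {s : ℂ | s.re ≤ 0 ∧ 0 ≤ s.im ∧ s.im * T < Real.pi ∧ s.im ≤ -s.re * Real.tan β}
      = (· * (T : ℂ)) ⁻¹' C := by
    ext s
    rw [Set.mem_preimage, Set.mem_inter_iff, mul_ofReal_mem_upperDampingCone_iff hT]
    simp only [upperDampingCone, Set.mem_ofPred_eq, im_mul_ofReal]
    tauto
  have hC : C ⊆ {w | -Real.pi < w.im ∧ w.im ≤ Real.pi} := fun w ⟨⟨_, him, _⟩, hπ⟩ =>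
    ⟨by linarith [Real.pi_pos], le_of_lt hπ⟩
  rw [hS, show (fun s : ℂ => exp (s * T)) = exp ∘ (· * (T : ℂ)) from rfl, Set.image_comp,
    Set.image_preimage_eq _ (mul_right_surjective₀ (ofReal_ne_zero.mpr hT.ne')),
    image_exp_eq_of_subset_strip hC]
  ext z
  simp only [C, Set.mem_ofPred_eq, Set.mem_inter_iff]
  refine and_congr_right fun hz => ?_
  rw [log_mem_upperDampingCone_iff htan hz, log_im]
  tauto
end

section
/- Let λ be a real symmetric m×m matrix, β a real m×m matrix, and let D = {z ∈ ℂ : λ + βz + βᵀz̄ ⪰ 0} be the associated LMI region (positive semidefiniteness of the Hermitian matrix λ + βz + βᵀz̄). Let P be a real symmetric positive-definite n×n matrix and Q a real n×n matrix such that the Kronecker-product matrix M = λ ⊗ P + β ⊗ Q + βᵀ ⊗ Qᵀ is positive semidefinite. Then every (complex) eigenvalue of the matrix Â = Q P⁻¹ belongs to D. -/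
/-!
Let `A = Q P⁻¹` and let `s` be a left eigenvector of `A` for `μ`; put `u = s̄`, so `u* A = μ u*`.
Since `Q = A P`, we get `u* Q u = μ p` and `u* Qᴴ u = μ̄ p` with `p = u* P u > 0`. Hence the
quadratic form of `M = λ ⊗ P + β ⊗ Q + βᴴ ⊗ Qᴴ` at `x ⊗ u` equals `p · x* (λ + μ β + μ̄ βᴴ) x`,
and `M ⪰ 0` forces `x* (λ + μ β + μ̄ βᴴ) x ≥ 0` for every complex `x`. The real statement is the
case of complexified real matrices.
-/

open Matrix ComplexOrder Kronecker

namespace Matrix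

variable {ι ι' κ κ' R : Type*}

theorem dotProduct_kronecker_mulVec [Fintype ι] [Fintype ι'] [Fintype κ] [Fintype κ']
    [CommSemiring R] (A : Matrix ι ι' R) (B : Matrix κ κ' R)
    (x : ι → R) (y : ι' → R) (u : κ → R) (v : κ' → R) :
    (fun p : ι × κ => x p.1 * u p.2) ⬝ᵥ (A ⊗ₖ B) *ᵥ (fun p : ι' × κ' => y p.1 * v p.2)
      = (x ⬝ᵥ A *ᵥ y) * (u ⬝ᵥ B *ᵥ v) := by
  simp only [dotProduct, mulVec, kroneckerMap_apply, Fintype.sum_prod_type, Finset.sum_mul,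
    Finset.mul_sum]
  refine Finset.sum_comm.trans (Finset.sum_congr rfl fun k _ => ?_)
  refine Eq.symm (Finset.sum_comm.trans (Finset.sum_congr rfl fun i _ => ?_))
  refine Finset.sum_comm.trans
    (Finset.sum_congr rfl fun j _ => Finset.sum_congr rfl fun l _ => ?_)
  ring

theorem dotProduct_mul_mulVec_of_vecMul_eq_smul [Fintype ι] [Fintype κ] [CommSemiring R]
    {A : Matrix ι ι R} (B : Matrix ι κ R) {s : ι → R} {μ : R} (hs : s ᵥ* A = μ • s)
    (v : κ → R) : s ⬝ᵥ (A * B) *ᵥ v = μ * (s ⬝ᵥ B *ᵥ v) := by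
  rw [← mulVec_mulVec, dotProduct_mulVec, hs, smul_dotProduct, smul_eq_mul]

theorem star_dotProduct_conjTranspose_mulVec [Fintype ι] [CommSemiring R] [StarRing R]
    (M : Matrix ι ι R) (u : ι → R) : star u ⬝ᵥ Mᴴ *ᵥ u = star (star u ⬝ᵥ M *ᵥ u) := by
  rw [star_dotProduct, star_mulVec, conjTranspose_conjTranspose, ← dotProduct_mulVec]

theorem exists_vecMul_eq_smul_of_mem_spectrum {K : Type*} [Field K] [Fintype ι] [DecidableEq ι]
    {A : Matrix ι ι K} {μ : K} (hμ : μ ∈ spectrum K A) : ∃ s ≠ 0, s ᵥ* A = μ • s := by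
  rw [spectrum.mem_iff, isUnit_iff_isUnit_det, isUnit_iff_ne_zero, not_not,
    ← exists_vecMul_eq_zero_iff] at hμ
  obtain ⟨s, hs0, hs⟩ := hμ
  refine ⟨s, hs0, ?_⟩
  rwa [vecMul_sub, Algebra.algebraMap_eq_smul_one, vecMul_smul, vecMul_one, sub_eq_zero,
    eq_comm] at hs

section LMI

variable [CommSemiring R] [StarRing R]

/-- The paper's `f_D(z)`, with `βᴴ` in place of `βᵀ` (the same for real `β`). -/
def lmiCharFun (Λ β : Matrix ι ι R) (z : R) : Matrix ι ι R :=
  Λ + z • β + star z • βᴴ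

/-- The paper's `M_D(Q, P)`, with the same convention. -/
def lmiMatrix (Λ β : Matrix ι ι R) (P Q : Matrix κ κ R) : Matrix (ι × κ) (ι × κ) R :=
  Λ ⊗ₖ P + β ⊗ₖ Q + βᴴ ⊗ₖ Qᴴ

theorem isHermitian_lmiCharFun {Λ : Matrix ι ι R} (hΛ : Λ.IsHermitian) (β : Matrix ι ι R)
    (z : R) : (lmiCharFun Λ β z).IsHermitian := by
  simp only [IsHermitian, lmiCharFun, conjTranspose_add, conjTranspose_smul,
    conjTranspose_conjTranspose, star_star, hΛ.eq]
  exact add_right_comm _ _ _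

theorem star_dotProduct_lmiMatrix_mul_mulVec [Fintype ι] [Fintype κ] (Λ β : Matrix ι ι R)
    {A : Matrix κ κ R} (P : Matrix κ κ R) {u : κ → R} {μ : R} (hu : star u ᵥ* A = μ • star u)
    (hp : IsSelfAdjoint (star u ⬝ᵥ P *ᵥ u)) (x : ι → R) :
    star (fun p : ι × κ => x p.1 * u p.2) ⬝ᵥ lmiMatrix Λ β P (A * P) *ᵥ
        (fun p : ι × κ => x p.1 * u p.2)
      = (star x ⬝ᵥ lmiCharFun Λ β μ *ᵥ x) * (star u ⬝ᵥ P *ᵥ u) := by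
  have hstar : star (fun p : ι × κ => x p.1 * u p.2) = fun p => star x p.1 * star u p.2 :=
    funext fun p => star_mul' _ _
  have hQ : star u ⬝ᵥ (A * P) *ᵥ u = μ * (star u ⬝ᵥ P *ᵥ u) :=
    dotProduct_mul_mulVec_of_vecMul_eq_smul P hu u
  have hQH : star u ⬝ᵥ (A * P)ᴴ *ᵥ u = star μ * (star u ⬝ᵥ P *ᵥ u) := by
    rw [star_dotProduct_conjTranspose_mulVec, hQ, star_mul', hp.star_eq]
  simp only [lmiMatrix, lmiCharFun, hstar, add_mulVec, dotProduct_add,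
    dotProduct_kronecker_mulVec, hQ, hQH, smul_mulVec, dotProduct_smul, smul_eq_mul]
  ring

end LMI

theorem lmiCharFun_posSemidef_of_mem_spectrum [Fintype ι] [Fintype κ] [DecidableEq κ]
    {Λ : Matrix ι ι ℂ} (hΛ : Λ.IsHermitian) (β : Matrix ι ι ℂ) {A P : Matrix κ κ ℂ}
    (hP : P.PosDef) (hM : (lmiMatrix Λ β P (A * P)).PosSemidef) {μ : ℂ}
    (hμ : μ ∈ spectrum ℂ A) : (lmiCharFun Λ β μ).PosSemidef := by
  obtain ⟨u, hu0, hu⟩ : ∃ u ≠ 0, star u ᵥ* A = μ • star u := by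
    obtain ⟨s, hs0, hs⟩ := exists_vecMul_eq_smul_of_mem_spectrum hμ
    exact ⟨star s, star_ne_zero.2 hs0, by rwa [star_star]⟩
  have hp : 0 < star u ⬝ᵥ P *ᵥ u := hP.dotProduct_mulVec_pos hu0
  refine posSemidef_iff_dotProduct_mulVec.2 ⟨isHermitian_lmiCharFun hΛ β μ, fun x => ?_⟩
  have hx := hM.dotProduct_mulVec_nonneg (fun p => x p.1 * u p.2)
  rw [star_dotProduct_lmiMatrix_mul_mulVec Λ β P hu (IsSelfAdjoint.of_nonneg hp.le)] at hx
  simpa [hp.ne'] using mul_nonneg hx (RCLike.inv_pos_of_pos hp).le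

theorem PosSemidef.map_ofReal [Fintype ι] {M : Matrix ι ι ℝ} (hM : M.PosSemidef) :
    (M.map ((↑) : ℝ → ℂ)).PosSemidef := by
  classical
  obtain ⟨B, rfl⟩ : ∃ B : Matrix ι ι ℝ, M = star B * B := by
    open scoped MatrixOrder in exact CStarAlgebra.nonneg_iff_eq_star_mul_self.mp hM.nonneg
  convert posSemidef_conjTranspose_mul_self (B.map ((↑) : ℝ → ℂ)) using 1
  ext i j
  simp [mul_apply]

theorem PosDef.map_ofReal [Fintype ι] {M : Matrix ι ι ℝ} (hM : M.PosDef) :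
    (M.map ((↑) : ℝ → ℂ)).PosDef := by
  classical
  exact hM.posSemidef.map_ofReal.posDef_iff_isUnit.2 (hM.isUnit.map Complex.ofRealHom.mapMatrix)

theorem IsSymm.isHermitian_map_ofReal {M : Matrix ι ι ℝ} (hM : M.IsSymm) :
    (M.map ((↑) : ℝ → ℂ)).IsHermitian :=
  (isHermitian_iff_isSymm.2 hM).map _ fun r => (Complex.conj_ofReal r).symm

theorem lmiMatrix_map_ofReal (Λ β : Matrix ι ι ℝ) (P Q : Matrix κ κ ℝ) :
    lmiMatrix (Λ.map ((↑) : ℝ → ℂ)) (β.map (↑)) (P.map (↑)) (Q.map (↑))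
      = (Λ ⊗ₖ P + β ⊗ₖ Q + βᵀ ⊗ₖ Qᵀ).map (↑) := by
  ext ⟨i, k⟩ ⟨j, l⟩
  simp [lmiMatrix]

theorem lmiCharFun_map_ofReal (Λ β : Matrix ι ι ℝ) (z : ℂ) :
    lmiCharFun (Λ.map ((↑) : ℝ → ℂ)) (β.map (↑)) z
      = Λ.map (↑) + z • β.map (↑) + starRingEnd ℂ z • (β.map (↑))ᵀ := by
  ext i j
  simp [lmiCharFun]

end Matrix

theorem eigenvalues_in_LMI_region_of_feasible_general
    (m n : ℕ) (Λ β : Matrix (Fin m) (Fin m) ℝ) (hΛ : Λ.IsSymm)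
    (P Q : Matrix (Fin n) (Fin n) ℝ) (hP : P.PosDef)
    (hM : (Λ ⊗ₖ P + β ⊗ₖ Q + βᵀ ⊗ₖ Qᵀ).PosSemidef)
    (μ : ℂ) (hμ : μ ∈ spectrum ℂ ((Q * P⁻¹).map (fun x : ℝ => (x : ℂ)))) :
    (Λ.map (fun x : ℝ => (x : ℂ))
      + μ • β.map (fun x : ℝ => (x : ℂ))
      + (starRingEnd ℂ) μ • (β.map (fun x : ℝ => (x : ℂ)))ᵀ).PosSemidef := by
  have hQ : Q.map ((↑) : ℝ → ℂ) = (Q * P⁻¹).map (↑) * P.map (↑) := by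
    have hPdet : IsUnit P.det := P.isUnit_iff_isUnit_det.1 hP.isUnit
    conv_lhs => rw [← nonsing_inv_mul_cancel_right P Q hPdet]
    exact Matrix.map_mul (f := Complex.ofRealHom)
  rw [← lmiCharFun_map_ofReal]
  refine lmiCharFun_posSemidef_of_mem_spectrum hΛ.isHermitian_map_ofReal _ hP.map_ofReal ?_ hμ
  rw [← hQ, lmiMatrix_map_ofReal]
  exact hM.map_ofReal

/-- Feasibility of the LMI constraint `λ ⊗ P + β ⊗ Q + βᵀ ⊗ Qᵀ ⪰ 0` with
`P = Pᵀ ≻ 0` implies that every complex eigenvalue `μ` of `Â = Q P⁻¹` lies in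
the LMI region `D = {z : λ + β z + βᵀ z̄ ⪰ 0}`. -/
theorem eigenvalues_in_LMI_region_of_feasible
    (m n : ℕ) (Λ β : Matrix (Fin m) (Fin m) ℝ) (hΛ : Λ.IsSymm)
    (P Q : Matrix (Fin n) (Fin n) ℝ) (hP : P.PosDef) (hPsymm : P.IsSymm)
    (hM : (Λ ⊗ₖ P + β ⊗ₖ Q + βᵀ ⊗ₖ Qᵀ).PosSemidef)
    (μ : ℂ) (hμ : μ ∈ spectrum ℂ ((Q * P⁻¹).map (fun x : ℝ => (x : ℂ)))) :
    (Λ.map (fun x : ℝ => (x : ℂ))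
      + μ • β.map (fun x : ℝ => (x : ℂ))
      + (starRingEnd ℂ) μ • (β.map (fun x : ℝ => (x : ℂ)))ᵀ).PosSemidef :=
  eigenvalues_in_LMI_region_of_feasible_general m n Λ β hΛ P Q hP hM μ hμ
end
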